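/- arXiv:2408.01339 — 2 statements merged into one kernel-verified Lean document; each statement's English description precedes it below -/
import Mathlib

section
/- Assume H_X Sᵀ = T H_G. Let d ≥ 1 and suppose the memory has distance at least d in the following sense: every e ∈ 𝔽₂^n with H_X eᵀ = 0 and J_X eᵀ ≠ 0 satisfies |e| ≥ d, and every e ∈ 𝔽₂^n with H_Z eᵀ = 0 and J_Z eᵀ ≠ 0 satisfies |e| ≥ d. Let w ≥ 1 be a natural number such that |uS| ≤ w·|u| for all u ∈ 𝔽₂^{n_G}. Then: (a) every e with H^{MB}_X eᵀ = 0 and J^{MB}_X eᵀ ≠ 0 satisfies w·|e| ≥ d; (b) every e with H^{MB}_Z eᵀ = 0 and J^{MB}_Z eᵀ ≠ 0 satisfies |e| ≥ d. In particular the branch-sticker deformed code has distance at least d/w, independently of d_R. -/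
open Matrix

/-- The `X`-check matrix of the branch-sticker deformed code, with `d_R = m + 1`.
Column blocks: `u_0` (`Fin n`), `u_1,…,u_m` (`Fin m × Fin nG`, index `j0` is `u_{j0+1}`;
`u_m = u_{d_R-1}` is the open boundary), `v_1,…,v_m` (`Fin m × Fin rG`, index `i0` is
`v_{i0+1}`). -/
def HMBX (m : ℕ) {n nG rX rG : ℕ} (HX : Matrix (Fin rX) (Fin n) (ZMod 2))
    (HG : Matrix (Fin rG) (Fin nG) (ZMod 2))
    (T : Matrix (Fin rX) (Fin rG) (ZMod 2)) :
    Matrix (Fin rX ⊕ Fin m × Fin rG)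
      (Fin n ⊕ (Fin m × Fin nG ⊕ Fin m × Fin rG)) (ZMod 2) :=
  Matrix.of fun r c =>
    match r, c with
    | Sum.inl a, Sum.inl j => HX a j
    | Sum.inl _, Sum.inr (Sum.inl _) => 0
    | Sum.inl a, Sum.inr (Sum.inr (i, b)) => if (i : ℕ) = 0 then T a b else 0
    | Sum.inr _, Sum.inl _ => 0
    | Sum.inr (j0, a), Sum.inr (Sum.inl (j', c')) => if j' = j0 then HG a c' else 0
    | Sum.inr (j0, a), Sum.inr (Sum.inr (i, b)) =>
        if ((i : ℕ) = (j0 : ℕ) ∨ (i : ℕ) = (j0 : ℕ) + 1) ∧ b = a then 1 else 0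

/-- The `Z`-check matrix of the branch-sticker deformed code, with `d_R = m + 1`.
Row blocks: memory `Z` checks (`Fin rZ`) and sticker `Z` checks `i = 1,…,m`
(`Fin m × Fin nG`, index `i0` is check row `i0+1`). -/
def HMBZ (m : ℕ) {n nG rZ rG : ℕ} (HZ : Matrix (Fin rZ) (Fin n) (ZMod 2))
    (HG : Matrix (Fin rG) (Fin nG) (ZMod 2))
    (S : Matrix (Fin nG) (Fin n) (ZMod 2)) :
    Matrix (Fin rZ ⊕ Fin m × Fin nG)
      (Fin n ⊕ (Fin m × Fin nG ⊕ Fin m × Fin rG)) (ZMod 2) :=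
  Matrix.of fun r c =>
    match r, c with
    | Sum.inl a, Sum.inl j => HZ a j
    | Sum.inl _, Sum.inr _ => 0
    | Sum.inr (i, cc), Sum.inl j => if (i : ℕ) = 0 then S cc j else 0
    | Sum.inr (i, cc), Sum.inr (Sum.inl (j0, c')) =>
        if ((j0 : ℕ) + 1 = (i : ℕ) ∨ (j0 : ℕ) = (i : ℕ)) ∧ c' = cc then 1 else 0
    | Sum.inr (i, cc), Sum.inr (Sum.inr (i', b)) =>
        if (i' : ℕ) = (i : ℕ) then HG b cc else 0


/-- The `X` logical generator matrix of the branch-sticker deformed code: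
`J_X` in block `u_0`, `J_X Sᵀ` in each block `u_j`, zero in all `v` blocks. -/
def JMBX (m : ℕ) {n nG rG k : ℕ} (JX : Matrix (Fin k) (Fin n) (ZMod 2))
    (S : Matrix (Fin nG) (Fin n) (ZMod 2)) :
    Matrix (Fin k) (Fin n ⊕ (Fin m × Fin nG ⊕ Fin m × Fin rG)) (ZMod 2) :=
  Matrix.of fun a c =>
    match c with
    | Sum.inl j => JX a j
    | Sum.inr (Sum.inl (_, c')) => (JX * Sᵀ) a c'
    | Sum.inr (Sum.inr _) => 0

/-- The `Z` logical generator matrix of the branch-sticker deformed code: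
`J_Z` in block `u_0`, zero elsewhere. -/
def JMBZ (m nG rG : ℕ) {n k : ℕ} (JZ : Matrix (Fin k) (Fin n) (ZMod 2)) :
    Matrix (Fin k) (Fin n ⊕ (Fin m × Fin nG ⊕ Fin m × Fin rG)) (ZMod 2) :=
  Matrix.of fun a c =>
    match c with
    | Sum.inl j => JZ a j
    | Sum.inr _ => 0

/-- Hamming weight of a vector. -/
def wt {ι : Type*} [Fintype ι] (v : ι → ZMod 2) : ℕ :=
  (Finset.univ.filter fun i => v i ≠ 0).card

/-! A logical `X` error `e = (e₀, u₁, …, u_m, v₁, …, v_m)` of the deformed code collapses to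
the memory error `f = P e = e₀ + ∑ⱼ uⱼ S`. Adding `T` times every sticker `X` check to the
memory `X` checks gives `H_X · P = [E | T ⋯ T] · H^{MB}_X`: on the `u_j` blocks this is
`H_X Sᵀ = T H_G`, and every `v_i` block receives `T` exactly twice (from sticker rows `i` and
`i - 1`, or from sticker row `1` and the memory row when `i = 1`). Since also
`J^{MB}_X = J_X · P`, `f` is a logical error of the memory, so `d ≤ |f| ≤ w |e|`. For `Z`
errors the same argument works with the projection onto the block `u_0`. -/

section Weight

variable {ι κ : Type*} [Fintype ι] [Fintype κ]

lemma wt_add_le (a b : ι → ZMod 2) : wt (a + b) ≤ wt a + wt b := by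
  classical
  refine (Finset.card_le_card fun i => ?_).trans (Finset.card_union_le _ _)
  simp only [Finset.mem_filter, Finset.mem_univ, true_and, Finset.mem_union, Pi.add_apply]
  contrapose!
  rintro ⟨ha, hb⟩
  simp [ha, hb]

lemma wt_sum_le {α : Type*} (s : Finset α) (v : α → ι → ZMod 2) :
    wt (∑ t ∈ s, v t) ≤ ∑ t ∈ s, wt (v t) := by
  classical
  induction s using Finset.induction with
  | empty => simp [wt]
  | insert a s ha ih =>
    rw [Finset.sum_insert ha, Finset.sum_insert ha]
    exact (wt_add_le _ _).trans (Nat.add_le_add_left ih _)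

lemma wt_eq_sum (v : ι → ZMod 2) : wt v = ∑ i, if v i ≠ 0 then 1 else 0 :=
  Finset.card_filter _ _

lemma wt_sum_type (v : ι ⊕ κ → ZMod 2) : wt v = wt (v ∘ Sum.inl) + wt (v ∘ Sum.inr) := by
  simp only [wt_eq_sum, Fintype.sum_sum_type, Function.comp_apply]

lemma wt_prod_type (v : ι × κ → ZMod 2) : wt v = ∑ i, wt fun j => v (i, j) := by
  simp only [wt_eq_sum, Fintype.sum_prod_type]

end Weight

section WtBoundedBy

variable {ι κ μ β : Type*} [Fintype κ] [Fintype μ] [Fintype β]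

def WtBoundedBy [Fintype ι] (w : ℕ) (A : Matrix ι κ (ZMod 2)) : Prop :=
  ∀ v, wt (A *ᵥ v) ≤ w * wt v

variable [Fintype ι] {w : ℕ}

lemma wtBoundedBy_one [DecidableEq ι] (hw : 1 ≤ w) : WtBoundedBy w (1 : Matrix ι ι (ZMod 2)) :=
  fun v => by simpa only [one_mulVec] using Nat.le_mul_of_pos_left _ hw

lemma wtBoundedBy_zero : WtBoundedBy w (0 : Matrix ι κ (ZMod 2)) :=
  fun v => by simp [wt]

lemma WtBoundedBy.fromCols {A : Matrix ι κ (ZMod 2)} {B : Matrix ι μ (ZMod 2)}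
    (hA : WtBoundedBy w A) (hB : WtBoundedBy w B) : WtBoundedBy w (A.fromCols B) := fun v =>
  calc wt (A.fromCols B *ᵥ v) ≤ wt (A *ᵥ v ∘ Sum.inl) + wt (B *ᵥ v ∘ Sum.inr) := by
        rw [fromCols_mulVec]; exact wt_add_le _ _
    _ ≤ w * wt (v ∘ Sum.inl) + w * wt (v ∘ Sum.inr) := Nat.add_le_add (hA _) (hB _)
    _ = w * wt v := by rw [wt_sum_type, Nat.mul_add]

lemma WtBoundedBy.submatrix_snd {A : Matrix ι β (ZMod 2)} (hA : WtBoundedBy w A) :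
    WtBoundedBy w (A.submatrix id Prod.snd : Matrix ι (κ × β) (ZMod 2)) := fun v => by
  have hv : A.submatrix id Prod.snd *ᵥ v = A *ᵥ ∑ t, fun b => v (t, b) := by
    ext i
    simp only [mulVec, dotProduct, submatrix_apply, id, Fintype.sum_prod_type, Finset.sum_apply,
      Finset.mul_sum]
    exact Finset.sum_comm
  calc wt (A.submatrix id Prod.snd *ᵥ v) ≤ w * wt (∑ t, fun b => v (t, b)) := hv ▸ hA _
    _ ≤ w * ∑ t, wt fun b => v (t, b) := Nat.mul_le_mul_left _ (wt_sum_le _ _)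
    _ = w * wt v := by rw [wt_prod_type]

end WtBoundedBy

theorem le_mul_wt_of_mul_eq_mul {ι ι' κ κ' ρ : Type*} [Fintype ι] [Fintype ι'] [Fintype κ]
    [Fintype κ'] [Fintype ρ] {H : Matrix ι κ (ZMod 2)} {J : Matrix ρ κ (ZMod 2)}
    {H' : Matrix ι' κ' (ZMod 2)} {J' : Matrix ρ κ' (ZMod 2)} {P : Matrix κ κ' (ZMod 2)}
    {M : Matrix ι ι' (ZMod 2)} {d w : ℕ} (hH : H * P = M * H') (hJ : J' = J * P)
    (hP : WtBoundedBy w P) (hd : ∀ f, H *ᵥ f = 0 → J *ᵥ f ≠ 0 → d ≤ wt f)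
    (e : κ' → ZMod 2) (he : H' *ᵥ e = 0) (hJe : J' *ᵥ e ≠ 0) : d ≤ w * wt e := by
  refine (hd (P *ᵥ e) ?_ ?_).trans (hP e)
  · rw [mulVec_mulVec, hH, ← mulVec_mulVec, he, mulVec_zero]
  · rwa [mulVec_mulVec, ← hJ]

lemma sum_ite_eq_or_eq_succ {R : Type*} [AddCommMonoid R] {m : ℕ} (i : Fin m) (x : R) :
    (∑ t : Fin m, if (i : ℕ) = t ∨ (i : ℕ) = t + 1 then x else 0) =
      x + if (i : ℕ) = 0 then 0 else x := by
  have hsplit : ∀ t : Fin m, (if (i : ℕ) = t ∨ (i : ℕ) = t + 1 then x else 0) =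
      (if i = t then x else 0) + if (i : ℕ) = t + 1 then x else 0 := fun t => by
    by_cases h : (i : ℕ) = t <;> simp [h, Fin.ext_iff]
  rw [Finset.sum_congr rfl fun t _ => hsplit t, Finset.sum_add_distrib, Finset.sum_ite_eq]
  simp only [Finset.mem_univ, if_true]
  congr 1
  obtain ⟨_ | k, hi⟩ := i
  · simp
  · rw [Finset.sum_eq_single ⟨k, by omega⟩
      (fun t _ ht => if_neg fun h => ht (Fin.ext (Nat.succ_inj.mp h).symm)) (by simp)]
    simp

section BranchSticker

variable {n nG rX rZ rG k : ℕ}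

/-- `e ↦ e_{u_0} + ∑ⱼ e_{u_j} S`, forgetting the `v` blocks. -/
def stickerProjection (m : ℕ) (S : Matrix (Fin nG) (Fin n) (ZMod 2)) :
    Matrix (Fin n) (Fin n ⊕ (Fin m × Fin nG ⊕ Fin m × Fin rG)) (ZMod 2) :=
  fromCols 1 (fromCols (Sᵀ.submatrix id Prod.snd) 0)

def stickerCheckCombination (m : ℕ) (T : Matrix (Fin rX) (Fin rG) (ZMod 2)) :
    Matrix (Fin rX) (Fin rX ⊕ Fin m × Fin rG) (ZMod 2) :=
  fromCols 1 (T.submatrix id Prod.snd)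

variable {m : ℕ}

lemma JMBX_eq_mul_stickerProjection (JX : Matrix (Fin k) (Fin n) (ZMod 2))
    (S : Matrix (Fin nG) (Fin n) (ZMod 2)) :
    JMBX m JX S (rG := rG) = JX * stickerProjection m S := by
  ext a (j | ⟨t, c⟩ | ⟨t, b⟩) <;>
    simp [JMBX, stickerProjection, mul_apply, one_apply]

lemma mul_stickerProjection {HX : Matrix (Fin rX) (Fin n) (ZMod 2)}
    {HG : Matrix (Fin rG) (Fin nG) (ZMod 2)} {S : Matrix (Fin nG) (Fin n) (ZMod 2)}
    {T : Matrix (Fin rX) (Fin rG) (ZMod 2)} (hcompat : HX * Sᵀ = T * HG) :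
    HX * stickerProjection m S = stickerCheckCombination m T * HMBX m HX HG T := by
  refine Matrix.ext fun a c => ?_
  rcases c with j | ⟨t, c⟩ | ⟨i, b⟩ <;>
    rw [mul_apply, mul_apply, Fintype.sum_sum_type, Fintype.sum_prod_type] <;>
    simp only [stickerProjection, stickerCheckCombination, HMBX,
      fromCols_apply_inl, fromCols_apply_inr, submatrix_apply, id_eq, of_apply, one_apply]
  · simp
  · rw [← mul_apply, hcompat, mul_apply, Finset.sum_comm]
    simp
  · have hcount := sum_ite_eq_or_eq_succ i (T a b)
    simp only [Matrix.zero_apply, mul_zero, Finset.sum_const_zero, mul_ite, mul_one, ite_mul,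
      one_mul, zero_mul, ite_and, Finset.sum_ite_irrel, Finset.sum_ite_eq, Finset.mem_univ,
      if_true, hcount]
    split_ifs <;> simp [CharTwo.add_self_eq_zero]

lemma wtBoundedBy_stickerProjection {S : Matrix (Fin nG) (Fin n) (ZMod 2)} {w : ℕ} (hw : 1 ≤ w)
    (hwS : ∀ u : Fin nG → ZMod 2, wt (vecMul u S) ≤ w * wt u) :
    WtBoundedBy w (stickerProjection m S (rG := rG)) :=
  (wtBoundedBy_one hw).fromCols <|
    (WtBoundedBy.submatrix_snd fun u => mulVec_transpose S u ▸ hwS u).fromCols wtBoundedBy_zero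

lemma JMBZ_eq_mul_fromCols (JZ : Matrix (Fin k) (Fin n) (ZMod 2)) :
    JMBZ m nG rG JZ = JZ * (fromCols 1 0 : Matrix (Fin n) (Fin n ⊕ _) (ZMod 2)) := by
  refine Matrix.ext fun a c => ?_
  rcases c with j | c <;> simp [JMBZ, mul_apply, one_apply]

lemma mul_fromCols_one_zero (HZ : Matrix (Fin rZ) (Fin n) (ZMod 2))
    (HG : Matrix (Fin rG) (Fin nG) (ZMod 2)) (S : Matrix (Fin nG) (Fin n) (ZMod 2)) :
    HZ * (fromCols 1 0 : Matrix (Fin n) (Fin n ⊕ _) (ZMod 2)) =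
      (fromCols 1 0 : Matrix (Fin rZ) (Fin rZ ⊕ Fin m × Fin nG) (ZMod 2)) * HMBZ m HZ HG S := by
  refine Matrix.ext fun a c => ?_
  rw [mul_apply, mul_apply, Fintype.sum_sum_type]
  rcases c with j | c <;> simp [HMBZ, one_apply]

end BranchSticker

theorem branch_sticker_distance_general (m : ℕ) {n nG rX rZ rG k : ℕ}
    (HX : Matrix (Fin rX) (Fin n) (ZMod 2))
    (HZ : Matrix (Fin rZ) (Fin n) (ZMod 2))
    (HG : Matrix (Fin rG) (Fin nG) (ZMod 2))
    (S : Matrix (Fin nG) (Fin n) (ZMod 2))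
    (T : Matrix (Fin rX) (Fin rG) (ZMod 2))
    (JX JZ : Matrix (Fin k) (Fin n) (ZMod 2))
    (hcompat : HX * Sᵀ = T * HG)
    (d : ℕ)
    (hdX : ∀ e : Fin n → ZMod 2, HX.mulVec e = 0 → JX.mulVec e ≠ 0 → d ≤ wt e)
    (hdZ : ∀ e : Fin n → ZMod 2, HZ.mulVec e = 0 → JZ.mulVec e ≠ 0 → d ≤ wt e)
    (w : ℕ) (hw : 1 ≤ w)
    (hwS : ∀ u : Fin nG → ZMod 2, wt (vecMul u S) ≤ w * wt u) :
    (∀ e : Fin n ⊕ (Fin m × Fin nG ⊕ Fin m × Fin rG) → ZMod 2,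
      (HMBX m HX HG T).mulVec e = 0 → (JMBX m JX S (rG := rG)).mulVec e ≠ 0 →
        d ≤ w * wt e) ∧
    (∀ e : Fin n ⊕ (Fin m × Fin nG ⊕ Fin m × Fin rG) → ZMod 2,
      (HMBZ m HZ HG S).mulVec e = 0 → (JMBZ m nG rG JZ).mulVec e ≠ 0 →
        d ≤ wt e) := by
  refine ⟨le_mul_wt_of_mul_eq_mul (mul_stickerProjection hcompat)
    (JMBX_eq_mul_stickerProjection JX S) (wtBoundedBy_stickerProjection hw hwS) hdX,
    fun e he hJe => ?_⟩
  simpa using le_mul_wt_of_mul_eq_mul (mul_fromCols_one_zero HZ HG S) (JMBZ_eq_mul_fromCols JZ)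
    ((wtBoundedBy_one le_rfl).fromCols wtBoundedBy_zero) hdZ e he hJe

/-- distance bound for the branch-sticker deformed code
(`d_R = m + 1`). If the memory has distance at least `d` and `|uS| ≤ w |u|`, then
(a) every `X`-type logical error `e` of the deformed code satisfies `w·|e| ≥ d`, and
(b) every `Z`-type logical error `e` satisfies `|e| ≥ d`; hence the deformed code
has distance at least `d/w`, independently of `d_R`. -/
theorem branch_sticker_distance (m : ℕ) (hm : 1 ≤ m) {n nG rX rZ rG k : ℕ}
    (HX : Matrix (Fin rX) (Fin n) (ZMod 2))
    (HZ : Matrix (Fin rZ) (Fin n) (ZMod 2))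
    (HG : Matrix (Fin rG) (Fin nG) (ZMod 2))
    (S : Matrix (Fin nG) (Fin n) (ZMod 2))
    (T : Matrix (Fin rX) (Fin rG) (ZMod 2))
    (JX JZ : Matrix (Fin k) (Fin n) (ZMod 2))
    (hcompat : HX * Sᵀ = T * HG)
    (d : ℕ) (hd : 1 ≤ d)
    (hdX : ∀ e : Fin n → ZMod 2, HX.mulVec e = 0 → JX.mulVec e ≠ 0 → d ≤ wt e)
    (hdZ : ∀ e : Fin n → ZMod 2, HZ.mulVec e = 0 → JZ.mulVec e ≠ 0 → d ≤ wt e)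
    (w : ℕ) (hw : 1 ≤ w)
    (hwS : ∀ u : Fin nG → ZMod 2, wt (vecMul u S) ≤ w * wt u) :
    (∀ e : Fin n ⊕ (Fin m × Fin nG ⊕ Fin m × Fin rG) → ZMod 2,
      (HMBX m HX HG T).mulVec e = 0 → (JMBX m JX S (rG := rG)).mulVec e ≠ 0 →
        d ≤ w * wt e) ∧
    (∀ e : Fin n ⊕ (Fin m × Fin nG ⊕ Fin m × Fin rG) → ZMod 2,
      (HMBZ m HZ HG S).mulVec e = 0 → (JMBZ m nG rG JZ).mulVec e ≠ 0 →
        d ≤ wt e) :=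
  branch_sticker_distance_general m HX HZ HG S T JX JZ hcompat d hdX hdZ w hw hwS
end

section
/- Let P ∈ 𝔽₂^{n×N} be the single block row with E_n in block u_0 and zero elsewhere, and P_ob ∈ 𝔽₂^{n_G×N} the single block row with E_{n_G} in the open-boundary block u_{d_R−1} and zero elsewhere, where N is the total number of columns of the branch-sticker deformed code. Assume H_X Sᵀ = T H_G, and suppose J_G ∈ 𝔽₂^{q×n_G} satisfies rs J_G ⊆ ker H_G and J_G S = J_{Z,A}, where J_{Z,A} consists of the first q rows of J_Z. Then: (i) rs H_X = rs(H^{MB}_X Pᵀ); (ii) rs(H_Z P) ⊆ rs H^{MB}_Z; (iii) rs J_X = rs(J^{MB}_X Pᵀ); (iv) rs(J_Z P) = rs J^{MB}_Z; (v) rs(J_{Z,A} P + J_G P_ob) ⊆ rs H^{MB}_Z. In particular, by (v), each measured logical operator is, modulo Z stabilisers of the deformed code, transferred to the open boundary of the branch sticker. -/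
open Matrix

/-- The row space (𝔽₂-span of the rows) of a matrix. -/
def rowSpan {ι κ : Type*} (A : Matrix ι κ (ZMod 2)) :
    Submodule (ZMod 2) (κ → ZMod 2) :=
  Submodule.span (ZMod 2) (Set.range A)

/-- The block-row matrix `P` with `E_n` in block `u_0` and zero elsewhere
(branch-sticker deformed code). -/
def PMB (m nG rG : ℕ) {n : ℕ} :
    Matrix (Fin n) (Fin n ⊕ (Fin m × Fin nG ⊕ Fin m × Fin rG)) (ZMod 2) :=
  Matrix.of fun a c =>
    match c with
    | Sum.inl j => if j = a then 1 else 0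
    | Sum.inr _ => 0

/-- The block-row matrix `P_ob` with `E_{n_G}` in the open-boundary block
`u_{d_R−1} = u_m` and zero elsewhere (branch-sticker deformed code). -/
def Pob (m nG rG : ℕ) {n : ℕ} :
    Matrix (Fin nG) (Fin n ⊕ (Fin m × Fin nG ⊕ Fin m × Fin rG)) (ZMod 2) :=
  Matrix.of fun a c =>
    match c with
    | Sum.inl _ => 0
    | Sum.inr (Sum.inl (j0, c')) => if (j0 : ℕ) + 1 = m ∧ c' = a then 1 else 0
    | Sum.inr (Sum.inr _) => 0

/-! Multiplying by `Pᵀ` keeps the `u_0` columns and multiplying by `P` pads with zero columns,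
so (i)–(iv) are block bookkeeping. For (v), add up the sticker `Z` checks of all layers with the
coefficients of a row `g` of `J_G`: on `u_0` this gives `g S = J_{Z,A}`, on the `v` blocks it gives
`H_G gᵀ = 0`, and every inner block `u_j` is hit by the checks of layers `j` and `j + 1`, which
cancel over `𝔽₂`, so only the open boundary `u_{d_R−1}` survives. -/

/-- With a dimension still unknown at elaboration time, `A * B` picks the `CStarMatrix`
default `HMul` instance, as in the statement below; it is definitionally the matrix product. -/
lemma cstarMatrix_hMul_eq_mul {l o p R : Type*} [Fintype o] [Mul R] [AddCommMonoid R]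
    (A : Matrix l o R) (B : Matrix o p R) :
    @HMul.hMul (Matrix l o R) (Matrix o p R) (Matrix l p R)
      CStarMatrix.instHMulOfFintypeOfMulOfAddCommMonoid A B = A * B :=
  rfl

section RowSpan

variable {ι ι' κ : Type*}

lemma vecMul_mem_rowSpan [Fintype ι] (A : Matrix ι κ (ZMod 2)) (y : ι → ZMod 2) :
    y ᵥ* A ∈ rowSpan A := by
  rw [rowSpan, show Set.range A = Set.range A.row from rfl, ← range_vecMulLinear]
  exact ⟨y, rfl⟩

lemma rowSpan_le_of_forall_mem (A : Matrix ι κ (ZMod 2)) (B : Matrix ι' κ (ZMod 2))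
    (h : ∀ i, B i ∈ rowSpan A) : rowSpan B ≤ rowSpan A :=
  Submodule.span_le.2 <| Set.range_subset_iff.2 h

lemma rowSpan_submatrix_le (A : Matrix ι κ (ZMod 2)) (f : ι' → ι) :
    rowSpan (A.submatrix f id) ≤ rowSpan A :=
  rowSpan_le_of_forall_mem A _ fun i => Submodule.subset_span ⟨f i, rfl⟩

lemma rowSpan_fromRows_zero (A : Matrix ι κ (ZMod 2)) :
    rowSpan (fromRows A (0 : Matrix ι' κ (ZMod 2))) = rowSpan A := by
  refine le_antisymm (rowSpan_le_of_forall_mem A _ ?_) (rowSpan_le_of_forall_mem _ A ?_)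
  · rintro (i | i)
    · exact Submodule.subset_span ⟨i, rfl⟩
    · exact Submodule.zero_mem _
  · exact fun i => Submodule.subset_span ⟨Sum.inl i, rfl⟩

end RowSpan

section Projections

variable {m n nG rG : ℕ} {ι : Type*}

lemma PMB_eq_fromCols : PMB m nG rG (n := n) = fromCols 1 0 := by
  ext a (j | c) <;> simp [PMB, Matrix.one_apply, eq_comm]

lemma mul_PMB (B : Matrix ι (Fin n) (ZMod 2)) : B * PMB m nG rG (n := n) = fromCols B 0 := by
  rw [PMB_eq_fromCols, mul_fromCols, Matrix.mul_one, Matrix.mul_zero]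

lemma mul_PMB_transpose (A : Matrix ι (Fin n ⊕ (Fin m × Fin nG ⊕ Fin m × Fin rG)) (ZMod 2)) :
    A * (PMB m nG rG (n := n))ᵀ = A.toCols₁ := by
  rw [PMB_eq_fromCols, transpose_fromCols, ← fromCols_toCols A, fromCols_mul_fromRows]
  simp

end Projections

lemma sum_ite_succ_or_self {R : Type*} [Ring R] [CharP R 2] {m : ℕ} (j : Fin m) (x : R) :
    ∑ i : Fin m, (if (j : ℕ) + 1 = i ∨ j = i then x else 0) =
      if (j : ℕ) + 1 = m then x else 0 := by
  have hsplit (i : Fin m) : (if (j : ℕ) + 1 = i ∨ j = i then x else 0) =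
      (if j = i then x else 0) + if (j : ℕ) + 1 = i then x else 0 := by
    by_cases h : j = i
    · subst h; simp
    · by_cases h' : (j : ℕ) + 1 = i <;> simp [h, h']
  rw [Finset.sum_congr rfl fun i _ => hsplit i, Finset.sum_add_distrib, Finset.sum_ite_eq]
  by_cases hlast : (j : ℕ) + 1 = m
  · have hnone (i : Fin m) : (j : ℕ) + 1 ≠ i := by omega
    rw [if_pos hlast]
    simp [hnone]
  · have hnext (i : Fin m) : (j : ℕ) + 1 = i ↔ ⟨(j : ℕ) + 1, by omega⟩ = i := by
      simp [Fin.ext_iff]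
    simp [hnext, hlast, CharTwo.add_self_eq_zero]

section Sticker

variable {m n nG rZ rG : ℕ} (HZ : Matrix (Fin rZ) (Fin n) (ZMod 2))
  (HG : Matrix (Fin rG) (Fin nG) (ZMod 2)) (S : Matrix (Fin nG) (Fin n) (ZMod 2))
  (g : Fin nG → ZMod 2)

lemma layers_vecMul_HMBZ_apply (c : Fin n ⊕ (Fin m × Fin nG ⊕ Fin m × Fin rG)) :
    ((fun p : Fin m × Fin nG => g p.2) ᵥ* (HMBZ m HZ HG S).toRows₂) c =
      ∑ i : Fin m, ∑ cc : Fin nG, g cc * HMBZ m HZ HG S (Sum.inr (i, cc)) c :=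
  Fintype.sum_prod_type _

lemma layers_vecMul_HMBZ_inl (hm : 1 ≤ m) (j : Fin n) :
    ((fun p : Fin m × Fin nG => g p.2) ᵥ* (HMBZ m HZ HG S).toRows₂) (Sum.inl j) =
      (g ᵥ* S) j := by
  have hfirst (i : Fin m) : (i : ℕ) = 0 ↔ i = ⟨0, hm⟩ := by simp [Fin.ext_iff]
  rw [layers_vecMul_HMBZ_apply]
  simp only [HMBZ, Matrix.of_apply, hfirst, mul_ite, mul_zero]
  simp [Finset.sum_ite_irrel, Matrix.vecMul, dotProduct]

lemma layers_vecMul_HMBZ_inr_inr (i : Fin m) (b : Fin rG) :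
    ((fun p : Fin m × Fin nG => g p.2) ᵥ* (HMBZ m HZ HG S).toRows₂)
        (Sum.inr (Sum.inr (i, b))) =
      (HG *ᵥ g) b := by
  rw [layers_vecMul_HMBZ_apply]
  simp only [HMBZ, Matrix.of_apply, Fin.val_inj, mul_ite, mul_zero]
  simp [Finset.sum_ite_irrel, Matrix.mulVec, dotProduct, mul_comm]

lemma layers_vecMul_HMBZ_inr_inl (j : Fin m) (c : Fin nG) :
    ((fun p : Fin m × Fin nG => g p.2) ᵥ* (HMBZ m HZ HG S).toRows₂)
        (Sum.inr (Sum.inl (j, c))) =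
      if (j : ℕ) + 1 = m then g c else 0 := by
  rw [layers_vecMul_HMBZ_apply, ← sum_ite_succ_or_self]
  refine Finset.sum_congr rfl fun i _ => ?_
  simp only [HMBZ, Matrix.of_apply, Fin.val_inj, ite_and, mul_ite, mul_one, mul_zero]
  split_ifs <;> simp [Finset.sum_ite_eq]

lemma sumElim_layers_vecMul_HMBZ (hm : 1 ≤ m) :
    Sum.elim 0 (fun p : Fin m × Fin nG => g p.2) ᵥ* HMBZ m HZ HG S =
      Sum.elim (g ᵥ* S)
        (Sum.elim (fun p => if (p.1 : ℕ) + 1 = m then g p.2 else 0)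
          fun p => (HG *ᵥ g) p.2) := by
  rw [← fromRows_toRows (HMBZ m HZ HG S), sumElim_vecMul_fromRows, zero_vecMul, zero_add]
  ext (j | (⟨j, c⟩ | ⟨i, b⟩))
  · exact layers_vecMul_HMBZ_inl HZ HG S g hm j
  · exact layers_vecMul_HMBZ_inr_inl HZ HG S g j c
  · exact layers_vecMul_HMBZ_inr_inr HZ HG S g i b

end Sticker

section Relations

variable {m n nG rX rZ rG k : ℕ}

lemma toCols₁_HMBX (HX : Matrix (Fin rX) (Fin n) (ZMod 2))
    (HG : Matrix (Fin rG) (Fin nG) (ZMod 2)) (T : Matrix (Fin rX) (Fin rG) (ZMod 2)) :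
    (HMBX m HX HG T).toCols₁ = fromRows HX 0 := by
  ext (a | a) j <;> rfl

lemma toCols₁_JMBX (JX : Matrix (Fin k) (Fin n) (ZMod 2))
    (S : Matrix (Fin nG) (Fin n) (ZMod 2)) :
    (JMBX m JX S (rG := rG)).toCols₁ = JX :=
  rfl

lemma fromCols_zero_eq_JMBZ (JZ : Matrix (Fin k) (Fin n) (ZMod 2)) :
    fromCols JZ 0 = JMBZ m nG rG JZ := by
  ext a (j | c) <;> rfl

lemma fromCols_zero_eq_HMBZ_submatrix (HZ : Matrix (Fin rZ) (Fin n) (ZMod 2))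
    (HG : Matrix (Fin rG) (Fin nG) (ZMod 2)) (S : Matrix (Fin nG) (Fin n) (ZMod 2)) :
    fromCols HZ 0 = (HMBZ m HZ HG S).submatrix Sum.inl id := by
  ext a (j | c) <;> rfl

lemma vecMul_Pob (g : Fin nG → ZMod 2) :
    g ᵥ* Pob m nG rG (n := n) =
      Sum.elim (0 : Fin n → ZMod 2)
        (Sum.elim (fun p => if (p.1 : ℕ) + 1 = m then g p.2 else 0)
          (0 : Fin m × Fin rG → ZMod 2)) := by
  ext (j | (⟨j, c⟩ | p)) <;> simp [Pob, Matrix.vecMul, dotProduct, ite_and]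

end Relations

lemma sumElim_boundary_mem_rowSpan_HMBZ {m n nG rZ rG : ℕ} (hm : 1 ≤ m)
    (HZ : Matrix (Fin rZ) (Fin n) (ZMod 2)) (HG : Matrix (Fin rG) (Fin nG) (ZMod 2))
    (S : Matrix (Fin nG) (Fin n) (ZMod 2)) {g : Fin nG → ZMod 2} (hg : HG *ᵥ g = 0) :
    Sum.elim (g ᵥ* S)
        (Sum.elim (fun p => if (p.1 : ℕ) + 1 = m then g p.2 else 0)
          (0 : Fin m × Fin rG → ZMod 2))
      ∈ rowSpan (HMBZ m HZ HG S) := by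
  have h := vecMul_mem_rowSpan (HMBZ m HZ HG S) (Sum.elim 0 fun p => g p.2)
  rwa [sumElim_layers_vecMul_HMBZ HZ HG S g hm, hg] at h

theorem branch_sticker_operator_relations_general (m : ℕ) (hm : 1 ≤ m)
    {n nG rX rZ rG k q : ℕ}
    (HX : Matrix (Fin rX) (Fin n) (ZMod 2))
    (HZ : Matrix (Fin rZ) (Fin n) (ZMod 2))
    (HG : Matrix (Fin rG) (Fin nG) (ZMod 2))
    (S : Matrix (Fin nG) (Fin n) (ZMod 2))
    (T : Matrix (Fin rX) (Fin rG) (ZMod 2))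
    (JX JZ : Matrix (Fin k) (Fin n) (ZMod 2))
    (JZA : Matrix (Fin q) (Fin n) (ZMod 2))
    (JG : Matrix (Fin q) (Fin nG) (ZMod 2))
    (hJGker : ∀ i : Fin q, HG.mulVec (JG i) = 0)
    (hJGS : JG * S = JZA) :
    rowSpan HX = rowSpan (HMBX m HX HG T * (PMB m nG rG)ᵀ) ∧
      rowSpan (HZ * PMB m nG rG) ≤ rowSpan (HMBZ m HZ HG S) ∧
      rowSpan JX = rowSpan (JMBX m JX S (rG := rG) * (PMB m nG rG)ᵀ) ∧
      rowSpan (JZ * PMB m nG rG) = rowSpan (JMBZ m nG rG JZ) ∧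
      rowSpan (JZA * PMB m nG rG + JG * Pob m nG rG) ≤ rowSpan (HMBZ m HZ HG S) := by
  simp only [cstarMatrix_hMul_eq_mul, mul_PMB_transpose, mul_PMB]
  refine ⟨?_, ?_, ?_, ?_, ?_⟩
  · rw [toCols₁_HMBX, rowSpan_fromRows_zero]
  · rw [fromCols_zero_eq_HMBZ_submatrix HZ HG S]
    exact rowSpan_submatrix_le _ _
  · rw [toCols₁_JMBX]
  · rw [fromCols_zero_eq_JMBZ]
  · refine rowSpan_le_of_forall_mem _ _ fun i => ?_
    convert sumElim_boundary_mem_rowSpan_HMBZ hm HZ HG S (hJGker i) using 1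
    rw [← hJGS]
    ext (j | (p | p)) <;> simp [vecMul_Pob, mul_apply_eq_vecMul]

/-- relations between memory operators and branch-sticker
deformed-code operators. In particular, by (v), each measured logical operator is,
modulo `Z` stabilisers of the deformed code, transferred to the open boundary of
the branch sticker. -/
theorem branch_sticker_operator_relations (m : ℕ) (hm : 1 ≤ m)
    {n nG rX rZ rG k q : ℕ}
    (HX : Matrix (Fin rX) (Fin n) (ZMod 2))
    (HZ : Matrix (Fin rZ) (Fin n) (ZMod 2))
    (HG : Matrix (Fin rG) (Fin nG) (ZMod 2))
    (S : Matrix (Fin nG) (Fin n) (ZMod 2))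
    (T : Matrix (Fin rX) (Fin rG) (ZMod 2))
    (JX JZ : Matrix (Fin k) (Fin n) (ZMod 2))
    (JZA : Matrix (Fin q) (Fin n) (ZMod 2))
    (JG : Matrix (Fin q) (Fin nG) (ZMod 2))
    (hcompat : HX * Sᵀ = T * HG)
    (hqk : q ≤ k)
    (hJZA : ∀ i : Fin q, JZA i = JZ (Fin.castLE hqk i))
    (hJGker : ∀ i : Fin q, HG.mulVec (JG i) = 0)
    (hJGS : JG * S = JZA) :
    rowSpan HX = rowSpan (HMBX m HX HG T * (PMB m nG rG)ᵀ) ∧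
      rowSpan (HZ * PMB m nG rG) ≤ rowSpan (HMBZ m HZ HG S) ∧
      rowSpan JX = rowSpan (JMBX m JX S (rG := rG) * (PMB m nG rG)ᵀ) ∧
      rowSpan (JZ * PMB m nG rG) = rowSpan (JMBZ m nG rG JZ) ∧
      rowSpan (JZA * PMB m nG rG + JG * Pob m nG rG) ≤ rowSpan (HMBZ m HZ HG S) :=
  branch_sticker_operator_relations_general m hm HX HZ HG S T JX JZ JZA JG hJGker hJGS
end
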